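/- For R < 1.75r, consider the locally Steiner tree Σ₀ consisting of: a horizontal segment from A = (0, h) to P = (a, h'), segments from P forming appropriate Steiner configuration with a vertical segment and two slanted segments reaching within distance r of the top boundary, as depicted for a stadium of width 2R. If R < 1.75r then the length of Σ₀ is strictly smaller than 2|AB| where B is the right endpoint at the same height as A. Concretely: there exist angles making a connected set covering a full-width slab of the stadium boundary within distance r whose length per unit horizontal length is a constant c < 2. -/

import Mathlib

/-!
Take the core segment `[0, L]` with `L = 2 (d + r)`. The bottom side of the stadium is within `r`
of the segment of length `L` at height `r - R`; the top side is within `r` of two arms from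
`(d + r, R - r)` to `(r, R)` and to `(2d + r, R)` (their endpoints cover the last stretch of length
`r` at each end), and a vertical segment of length `2 |R - r|` joins the arms to the bottom segment.
With `e = r - |R - r|`, positive because `0 < R < 2r`, and `d = r² / e`, each arm has length
`√(d² + d e) < d + e`, so the total length is less than `L + 2 |R - r| + 2 (d + e) = 2L`.
-/

open MeasureTheory Metric Set

section Segment

variable {E : Type*} [NormedAddCommGroup E] [NormedSpace ℝ E]

theorem isCompact_segment (a b : E) : IsCompact (segment ℝ a b) :=
  convexHull_pair (𝕜 := ℝ) a b ▸ (toFinite {a, b}).isCompact_convexHull ℝ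

theorem isConnected_segment (a b : E) : IsConnected (segment ℝ a b) :=
  (convex_segment a b).isConnected ⟨a, left_mem_segment ℝ a b⟩

theorem IsConnected.union_segment {s : Set E} (hs : IsConnected s) {a : E} (ha : a ∈ s) (b : E) :
    IsConnected (s ∪ segment ℝ a b) :=
  hs.union ⟨a, ha, left_mem_segment ℝ a b⟩ (isConnected_segment a b)

theorem hausdorffMeasure_union_segment_le [MeasurableSpace E] [BorelSpace E] (s : Set E)
    (a b : E) : μH[1] (s ∪ segment ℝ a b) ≤ μH[1] s + edist a b :=
  (measure_union_le s _).trans_eq (by rw [hausdorffMeasure_segment])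

end Segment

namespace Complex

theorem dist_mk_of_im_eq (x₁ x₂ y : ℝ) : dist (⟨x₁, y⟩ : ℂ) ⟨x₂, y⟩ = |x₁ - x₂| := by
  rw [dist_of_im_eq (z := ⟨x₁, y⟩) (w := ⟨x₂, y⟩) rfl, Real.dist_eq]

theorem dist_mk_of_re_eq (x y₁ y₂ : ℝ) : dist (⟨x, y₁⟩ : ℂ) ⟨x, y₂⟩ = |y₁ - y₂| := by
  rw [dist_of_re_eq (z := ⟨x, y₁⟩) (w := ⟨x, y₂⟩) rfl, Real.dist_eq]

theorem im_mem_uIcc_of_mem_segment {a b z : ℂ} (hz : z ∈ segment ℝ a b) :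
    z.im ∈ uIcc a.im b.im := by
  rw [← segment_eq_uIcc]
  exact image_segment ℝ imLm.toAffineMap a b ▸ mem_image_of_mem _ hz

theorem exists_mem_segment_re_eq {a b : ℂ} {x : ℝ} (hx : x ∈ uIcc a.re b.re) :
    ∃ z ∈ segment ℝ a b, z.re = x := by
  rw [← segment_eq_uIcc] at hx
  obtain ⟨z, hz, rfl⟩ := (image_segment ℝ reLm.toAffineMap a b).symm ▸ hx
  exact ⟨z, hz, rfl⟩

theorem infDist_segment_le {a b q : ℂ} {ρ : ℝ} (hq : q.re ∈ uIcc a.re b.re)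
    (ha : |q.im - a.im| ≤ ρ) (hb : |q.im - b.im| ≤ ρ) : infDist q (segment ℝ a b) ≤ ρ := by
  obtain ⟨z, hz, hre⟩ := exists_mem_segment_re_eq hq
  have him := im_mem_uIcc_of_mem_segment hz
  calc infDist q (segment ℝ a b) ≤ dist q z := infDist_le_dist_of_mem hz
    _ = |q.im - z.im| := by rw [dist_of_re_eq hre.symm, Real.dist_eq]
    _ ≤ ρ := by
      rw [mem_uIcc] at him
      rw [abs_le] at ha hb ⊢
      constructor <;> rcases him with h | h <;> linarith [h.1, h.2]

theorem infDist_segment_ofReal {a b : ℝ} {p : ℂ} (hp : p.re ∈ uIcc a b) :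
    infDist p (segment ℝ (a : ℂ) b) = |p.im| := by
  refine le_antisymm (infDist_segment_le (by simpa using hp) (by simp) (by simp)) ?_
  refine (le_infDist ⟨_, left_mem_segment ℝ _ _⟩).2 fun z hz => ?_
  have hz0 : z.im = 0 := by simpa using im_mem_uIcc_of_mem_segment hz
  simpa [hz0, dist_eq] using abs_im_le_norm (p - z)

end Complex

/-- The tree `Σ₀` of the paper, for the stadium around `[0, 2 (d + r)]`. -/
def stadiumTree (r R d : ℝ) : Set ℂ :=
  segment ℝ ⟨0, r - R⟩ ⟨2 * (d + r), r - R⟩ ∪ segment ℝ ⟨d + r, r - R⟩ ⟨d + r, R - r⟩ ∪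
    segment ℝ ⟨d + r, R - r⟩ ⟨r, R⟩ ∪ segment ℝ ⟨d + r, R - r⟩ ⟨2 * d + r, R⟩

section StadiumTree

variable {r R d : ℝ}

theorem isCompact_stadiumTree : IsCompact (stadiumTree r R d) :=
  (((isCompact_segment _ _).union (isCompact_segment _ _)).union (isCompact_segment _ _)).union
    (isCompact_segment _ _)

theorem isConnected_stadiumTree : IsConnected (stadiumTree r R d) := by
  have hmid : (⟨d + r, r - R⟩ : ℂ) = midpoint ℝ ⟨0, r - R⟩ ⟨2 * (d + r), r - R⟩ := by
    apply Complex.ext <;> simp [midpoint_eq_smul_add]; ring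
  refine (((isConnected_segment _ _).union_segment ?_ _).union_segment ?_ _).union_segment ?_ _
  · exact hmid ▸ midpoint_mem_segment _ _
  · exact Or.inr (right_mem_segment ℝ _ _)
  · exact Or.inl (Or.inr (right_mem_segment ℝ _ _))

theorem hausdorffMeasure_stadiumTree_le (hd : 0 ≤ d) (hr : 0 ≤ r) :
    μH[1] (stadiumTree r R d) ≤
      ENNReal.ofReal (2 * (d + r) + 2 * |R - r| + 2 * √(d ^ 2 + r ^ 2)) := by
  have hAB : dist (⟨0, r - R⟩ : ℂ) ⟨2 * (d + r), r - R⟩ = 2 * (d + r) := by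
    rw [Complex.dist_mk_of_im_eq, zero_sub, abs_neg, abs_of_nonneg (by positivity)]
  have hSJ : dist (⟨d + r, r - R⟩ : ℂ) ⟨d + r, R - r⟩ = 2 * |R - r| := by
    rw [Complex.dist_mk_of_re_eq, show r - R - (R - r) = -2 * (R - r) by ring, abs_mul]
    norm_num
  have hJT₁ : dist (⟨d + r, R - r⟩ : ℂ) ⟨r, R⟩ = √(d ^ 2 + r ^ 2) := by
    rw [Complex.dist_eq_re_im]; ring_nf
  have hJT₂ : dist (⟨d + r, R - r⟩ : ℂ) ⟨2 * d + r, R⟩ = √(d ^ 2 + r ^ 2) := by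
    rw [Complex.dist_eq_re_im]; ring_nf
  calc μH[1] (stadiumTree r R d)
      ≤ μH[1] (segment ℝ (⟨0, r - R⟩ : ℂ) ⟨2 * (d + r), r - R⟩)
          + edist (⟨d + r, r - R⟩ : ℂ) ⟨d + r, R - r⟩
          + edist (⟨d + r, R - r⟩ : ℂ) ⟨r, R⟩ + edist (⟨d + r, R - r⟩ : ℂ) ⟨2 * d + r, R⟩ := by
        refine (hausdorffMeasure_union_segment_le _ _ _).trans ?_
        gcongr
        refine (hausdorffMeasure_union_segment_le _ _ _).trans ?_
        gcongr
        exact hausdorffMeasure_union_segment_le _ _ _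
    _ = _ := by
        rw [hausdorffMeasure_segment, edist_dist, edist_dist, edist_dist, edist_dist, hAB, hSJ,
          hJT₁, hJT₂, ← ENNReal.ofReal_add, ← ENNReal.ofReal_add, ← ENNReal.ofReal_add]
        · congr 1; ring
        all_goals positivity

theorem infDist_stadiumTree_le_of_subset {s : Set ℂ} (hs : s ⊆ stadiumTree r R d)
    (hne : s.Nonempty) {q : ℂ} (hq : infDist q s ≤ r) : infDist q (stadiumTree r R d) ≤ r :=
  (infDist_le_infDist_of_subset hs hne).trans hq

theorem infDist_stadiumTree_le_of_im_eq (hr : 0 ≤ r) {q : ℂ} (him : q.im = R)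
    (h₀ : 0 ≤ q.re) (hL : q.re ≤ 2 * (d + r)) : infDist q (stadiumTree r R d) ≤ r := by
  have hJ : |q.im - (R - r)| ≤ r := by rw [him, sub_sub_cancel, abs_of_nonneg hr]
  have hT : |q.im - R| ≤ r := by rwa [him, sub_self, abs_zero]
  have near_tip : ∀ x, |q.re - x| ≤ r → (⟨x, R⟩ : ℂ) ∈ stadiumTree r R d →
      infDist q (stadiumTree r R d) ≤ r := fun x hx hmem =>
    (infDist_le_dist_of_mem hmem).trans (by rwa [Complex.dist_of_im_eq him, Real.dist_eq])
  rcases le_total q.re r with h₁ | h₁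
  · exact near_tip r (abs_le.2 ⟨by linarith, by linarith⟩)
      (subset_union_left (subset_union_right (right_mem_segment ℝ _ _)))
  rcases le_total q.re (d + r) with h₂ | h₂
  · exact infDist_stadiumTree_le_of_subset (subset_union_right.trans subset_union_left)
      ⟨_, left_mem_segment ℝ _ _⟩
      (Complex.infDist_segment_le (mem_uIcc_of_ge h₁ h₂) hJ hT)
  rcases le_total q.re (2 * d + r) with h₃ | h₃
  · exact infDist_stadiumTree_le_of_subset subset_union_right ⟨_, left_mem_segment ℝ _ _⟩
      (Complex.infDist_segment_le (mem_uIcc_of_le h₂ h₃) hJ hT)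
  · exact near_tip (2 * d + r) (abs_le.2 ⟨by linarith, by linarith⟩)
      (subset_union_right (right_mem_segment ℝ _ _))

theorem infDist_stadiumTree_le_of_im_eq_neg (hr : 0 ≤ r) {q : ℂ} (him : q.im = -R)
    (h₀ : 0 ≤ q.re) (hL : q.re ≤ 2 * (d + r)) : infDist q (stadiumTree r R d) ≤ r := by
  have hA : |q.im - (r - R)| ≤ r := by
    rw [him, show -R - (r - R) = -r by ring, abs_neg, abs_of_nonneg hr]
  exact infDist_stadiumTree_le_of_subset
    (subset_union_left.trans (subset_union_left.trans subset_union_left))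
    ⟨_, left_mem_segment ℝ _ _⟩ (Complex.infDist_segment_le (mem_uIcc_of_le h₀ hL) hA hA)

end StadiumTree

theorem Real.sqrt_sq_add_mul_lt {d e : ℝ} (hd : 0 ≤ d) (he : 0 < e) : √(d ^ 2 + d * e) < d + e :=
  (Real.sqrt_lt' (by positivity)).2 (by nlinarith)

theorem stmt_19_general (r R : ℝ) (hR : 0 < R) (hRr : R < 1.75 * r) :
    ∃ (L : ℝ) (Sig : Set ℂ) (A B : ℂ), 0 < L ∧
      IsCompact Sig ∧ IsConnected Sig ∧ A ∈ Sig ∧ B ∈ Sig ∧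
      A.im = B.im ∧ 0 ≤ A.re ∧ A.re < B.re ∧ B.re ≤ L ∧
      (∀ p : ℂ, Metric.infDist p (segment ℝ (0 : ℂ) (L : ℂ)) = R →
        A.re ≤ p.re → p.re ≤ B.re → Metric.infDist p Sig ≤ r) ∧
      μH[1] Sig < ENNReal.ofReal (2 * dist A B) := by
  have hr : 0 < r := by linarith
  set e := r - |R - r|
  have he : 0 < e := sub_pos.2 (abs_sub_lt_iff.2 ⟨by linarith, by linarith⟩)
  set d := r ^ 2 / e
  have hd : 0 < d := by positivity
  have hAB : dist (⟨0, r - R⟩ : ℂ) ⟨2 * (d + r), r - R⟩ = 2 * (d + r) := by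
    rw [Complex.dist_mk_of_im_eq, zero_sub, abs_neg, abs_of_pos (by positivity)]
  refine ⟨2 * (d + r), stadiumTree r R d, ⟨0, r - R⟩, ⟨2 * (d + r), r - R⟩, by positivity,
    isCompact_stadiumTree, isConnected_stadiumTree,
    subset_union_left (subset_union_left (subset_union_left (left_mem_segment ℝ _ _))),
    subset_union_left (subset_union_left (subset_union_left (right_mem_segment ℝ _ _))),
    rfl, le_rfl, by positivity, le_rfl, fun p hp h₀ hL => ?_, ?_⟩
  · have hp' := Complex.infDist_segment_ofReal (a := 0) (b := 2 * (d + r)) (p := p)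
      (mem_uIcc_of_le h₀ hL)
    rw [Complex.ofReal_zero, hp] at hp'
    rcases eq_or_eq_neg_of_abs_eq hp'.symm with him | him
    · exact infDist_stadiumTree_le_of_im_eq hr.le him h₀ hL
    · exact infDist_stadiumTree_le_of_im_eq_neg hr.le him h₀ hL
  · have hsqrt := Real.sqrt_sq_add_mul_lt hd.le he
    rw [div_mul_cancel₀ _ he.ne'] at hsqrt
    refine (hausdorffMeasure_stadiumTree_le hd.le hr.le).trans_lt ?_
    rw [hAB, ENNReal.ofReal_lt_ofReal_iff (by positivity)]
    linarith

/-- Stadium counterexample: the stadium of width parameter R is the set of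
points at distance exactly R from a core segment [0, L] ⊂ ℝ ≅ ℝ × {0} ⊂ ℂ.
If R < 1.75·r, then (for a suitable length L) there is a compact connected set
Sig containing two points A, B at the same height with 0 ≤ Re A < Re B ≤ L,
covering the full-width slab {p on the stadium : Re A ≤ Re p ≤ Re B} within
distance r, whose length is strictly smaller than 2·|AB|. -/
theorem stmt_19 (r R : ℝ) (hr : 0 < r) (hR : 0 < R) (hRr : R < 1.75 * r) :
    ∃ (L : ℝ) (Sig : Set ℂ) (A B : ℂ), 0 < L ∧
      IsCompact Sig ∧ IsConnected Sig ∧ A ∈ Sig ∧ B ∈ Sig ∧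
      A.im = B.im ∧ 0 ≤ A.re ∧ A.re < B.re ∧ B.re ≤ L ∧
      (∀ p : ℂ, Metric.infDist p (segment ℝ (0 : ℂ) (L : ℂ)) = R →
        A.re ≤ p.re → p.re ≤ B.re → Metric.infDist p Sig ≤ r) ∧
      μH[1] Sig < ENNReal.ofReal (2 * dist A B) :=
  stmt_19_general r R hR hRr
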